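/- For a positive integer r and each nonnegative integer m, the limit γ_{h^{(r)}}(m) := lim_{x→∞} ( sum_{n ≤ x} h_n^{(r)} (log n)^m / n^r - (1/(r-1)!) * (ln x)^{m+2}/(m+2) + (ψ(r)/(r-1)!) * (ln x)^{m+1}/(m+1) ) exists. -/

import Mathlib

open Filter Finset

/-- Hyperharmonic numbers: `hh 0 n = 1/n`, `hh (r+1) n = ∑_{k=1}^n hh r k`. -/
noncomputable def hh : ℕ → ℕ → ℝ
  | 0, n => 1 / n
  | r + 1, n => ∑ k ∈ Finset.Icc 1 n, hh r k

/-- Digamma function `ψ = Γ'/Γ` on the reals. -/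
noncomputable def digamma (x : ℝ) : ℝ := deriv Real.Gamma x / Real.Gamma x

/-! The closed form `h_n^{(s+1)} = C(n+s, s) (H_{n+s} - H_s)` and `ψ(s+1) = H_s - γ` show that the
`n`-th summand is `(log^{m+1} n - ψ(s+1) log^m n) / (s! n)` up to an error `O(log^{m+1} n / n²)`,
which is summable because `C(n+s, s) / n^s = 1/s! + O(1/n)` and `H_{n+s} = log n + γ + O(1/n)`.
The two main terms are handled by comparing `∑_{n ≤ x} log^k n / n` with the primitive
`log^{k+1} x / (k+1)`: since `log^k t / t` eventually decreases to `0`, the difference converges. -/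

open Real Set Asymptotics
open scoped Nat Topology

local notation "γ" => eulerMascheroniConstant

lemma hh_one (n : ℕ) : hh 1 n = harmonic n := by
  simp [hh, harmonic_eq_sum_Icc]

lemma choose_succ_succ_mul_harmonic_sub (N s : ℕ) :
    ((N + 1).choose (s + 1) : ℝ) * (harmonic (N + 1) - harmonic (s + 1))
      = (N.choose (s + 1) : ℝ) * (harmonic N - harmonic (s + 1))
        + (N.choose s : ℝ) * (harmonic N - harmonic s) := by
  have hpascal : ((N + 1).choose (s + 1) : ℝ) = N.choose s + N.choose (s + 1) := by
    exact_mod_cast Nat.choose_succ_succ N s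
  have habsorb : ((N : ℝ) + 1) * N.choose s = (N + 1).choose (s + 1) * ((s : ℝ) + 1) := by
    exact_mod_cast Nat.add_one_mul_choose_eq N s
  simp only [harmonic_succ, Rat.cast_add, Rat.cast_inv, Rat.cast_natCast, Nat.cast_add,
    Nat.cast_one]
  rw [hpascal] at habsorb ⊢
  field_simp
  linear_combination (-1 : ℝ) * habsorb

lemma hh_succ_eq_choose_mul (s n : ℕ) :
    hh (s + 1) n = ((n + s).choose s : ℝ) * (harmonic (n + s) - harmonic s) := by
  induction s generalizing n with
  | zero => simp [hh_one]
  | succ s ih =>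
    induction n with
    | zero => simp [hh]
    | succ n ihn =>
      rw [hh, Finset.sum_Icc_succ_top (by omega), ← hh, ihn, ih,
        show n + 1 + (s + 1) = n + s + 1 + 1 by ring, choose_succ_succ_mul_harmonic_sub]
      ring_nf

lemma digamma_nat_add_one (s : ℕ) : digamma (s + 1) = harmonic s - γ := by
  rw [digamma, deriv_Gamma_nat, Gamma_nat_eq_factorial]
  field_simp
  ring

lemma mul_le_sub_le_mul_of_hasDerivAt_of_antitoneOn {f F : ℝ → ℝ} {x y : ℝ} (hxy : x ≤ y)
    (hF : ∀ t ∈ Icc x y, HasDerivAt F (f t) t) (hf : AntitoneOn f (Icc x y)) :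
    (y - x) * f y ≤ F y - F x ∧ F y - F x ≤ (y - x) * f x := by
  rcases hxy.eq_or_lt with rfl | hlt
  · simp
  obtain ⟨c, hc, hslope⟩ := exists_hasDerivAt_eq_slope F f hlt
    (fun t ht => (hF t ht).continuousAt.continuousWithinAt)
    (fun t ht => hF t (Ioo_subset_Icc_self ht))
  have hFc : F y - F x = (y - x) * f c := by
    rw [hslope]; field_simp [(sub_pos.2 hlt).ne']
  have hmem : c ∈ Icc x y := Ioo_subset_Icc_self hc
  rw [hFc]
  exact ⟨mul_le_mul_of_nonneg_left (hf hmem (right_mem_Icc.2 hxy) hc.2.le) (sub_nonneg.2 hxy),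
    mul_le_mul_of_nonneg_left (hf (left_mem_Icc.2 hxy) hmem hc.1.le) (sub_nonneg.2 hxy)⟩

section SumSubPrimitive

variable {f F : ℝ → ℝ} {a : ℕ}
  (hF : ∀ x, (a : ℝ) ≤ x → HasDerivAt F (f x) x) (hf : AntitoneOn f (Ici (a : ℝ)))
  (hf0 : Tendsto f atTop (𝓝 0))

include hf hf0 in
lemma AntitoneOn.nonneg_of_tendsto_zero {x : ℝ} (hx : (a : ℝ) ≤ x) : 0 ≤ f x :=
  le_of_tendsto hf0 (eventually_atTop.2 ⟨x, fun _ hy => hf hx (hx.trans hy) hy⟩)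

include hF hf in
lemma mul_le_sub_le_mul_of_le_of_antitoneOn_Ici {x y : ℝ} (hx : (a : ℝ) ≤ x) (hxy : x ≤ y) :
    (y - x) * f y ≤ F y - F x ∧ F y - F x ≤ (y - x) * f x :=
  mul_le_sub_le_mul_of_hasDerivAt_of_antitoneOn hxy (fun t ht => hF t (hx.trans ht.1))
    (hf.mono fun _ ht => hx.trans ht.1)

include hF hf hf0 in
lemma exists_tendsto_sum_Icc_sub_of_antitoneOn :
    ∃ c, Tendsto (fun N : ℕ => ∑ n ∈ Icc 1 N, f n - F N) atTop (𝓝 c) := by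
  set u : ℕ → ℝ := fun N => ∑ n ∈ Icc 1 N, f n - F N
  have hstep : ∀ N : ℕ, a ≤ N → f (N + 1) - f N ≤ u (N + 1) - u N ∧ u (N + 1) - u N ≤ 0 := by
    intro N hN
    have hN' : (a : ℝ) ≤ N := by exact_mod_cast hN
    have hu : u (N + 1) - u N = f (N + 1) - (F (N + 1) - F N) := by
      simp only [u, Finset.sum_Icc_succ_top (show 1 ≤ N + 1 by omega), Nat.cast_add_one]
      ring
    have hmvt := mul_le_sub_le_mul_of_le_of_antitoneOn_Ici hF hf hN'
      (le_add_of_nonneg_right zero_le_one)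
    simp only [add_sub_cancel_left, one_mul] at hmvt
    constructor <;> linarith
  set v : ℕ → ℝ := fun j => u (j + a)
  have hv_anti : Antitone v := antitone_nat_of_succ_le fun j => by
    simpa [v, add_right_comm j 1 a] using (hstep (j + a) (by omega)).2
  have hv_sub_mono : Monotone fun j => v j - f (j + a : ℕ) := monotone_nat_of_le_succ fun j => by
    have := (hstep (j + a) (by omega)).1
    simp only [v, add_right_comm j 1 a, Nat.cast_add_one]
    linarith
  have hv_bdd : BddBelow (range v) := by
    refine ⟨v 0 - f a, forall_mem_range.2 fun j => ?_⟩
    have h1 := hv_sub_mono (Nat.zero_le j)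
    have h2 := hf.nonneg_of_tendsto_zero hf0 (x := ((j + a : ℕ) : ℝ)) (by simp)
    simp only [zero_add] at h1
    linarith
  exact ⟨_, (tendsto_add_atTop_iff_nat a).1 (tendsto_atTop_ciInf hv_anti hv_bdd)⟩

include hF hf hf0 in
lemma exists_tendsto_sum_Icc_floor_sub_of_antitoneOn :
    ∃ c, Tendsto (fun x : ℝ => ∑ n ∈ Icc 1 ⌊x⌋₊, f n - F x) atTop (𝓝 c) := by
  obtain ⟨c, hc⟩ := exists_tendsto_sum_Icc_sub_of_antitoneOn hF hf hf0
  have hfloor : Tendsto (fun x : ℝ => f ⌊x⌋₊) atTop (𝓝 0) :=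
    hf0.comp (tendsto_natCast_atTop_atTop.comp tendsto_nat_floor_atTop)
  have hgap : Tendsto (fun x : ℝ => F x - F ⌊x⌋₊) atTop (𝓝 0) := by
    have hbounds : ∀ᶠ x : ℝ in atTop, 0 ≤ F x - F ⌊x⌋₊ ∧ F x - F ⌊x⌋₊ ≤ f ⌊x⌋₊ := by
      filter_upwards [eventually_ge_atTop (a : ℝ)] with x hx
      have hx0 : 0 ≤ x := (Nat.cast_nonneg a).trans hx
      have ha : (a : ℝ) ≤ ⌊x⌋₊ := by exact_mod_cast Nat.le_floor hx
      have hfrac : 0 ≤ x - ⌊x⌋₊ ∧ x - ⌊x⌋₊ ≤ 1 :=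
        ⟨sub_nonneg.2 (Nat.floor_le hx0), by linarith [Nat.lt_floor_add_one x]⟩
      have hmvt := mul_le_sub_le_mul_of_le_of_antitoneOn_Ici hF hf ha (Nat.floor_le hx0)
      have hfx := hf.nonneg_of_tendsto_zero hf0 (ha.trans (Nat.floor_le hx0))
      have hfl := hf.nonneg_of_tendsto_zero hf0 ha
      constructor <;> nlinarith
    exact tendsto_of_tendsto_of_tendsto_of_le_of_le' tendsto_const_nhds hfloor
      (hbounds.mono fun _ h => h.1) (hbounds.mono fun _ h => h.2)
  exact ⟨c, by simpa using (hc.comp tendsto_nat_floor_atTop).sub hgap⟩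

end SumSubPrimitive

lemma hasDerivAt_log_pow_succ_div (k : ℕ) {x : ℝ} (hx : x ≠ 0) :
    HasDerivAt (fun t => log t ^ (k + 1) / (k + 1)) (log x ^ k / x) x := by
  refine (((hasDerivAt_log hx).fun_pow (k + 1)).div_const ((k : ℝ) + 1)).congr_deriv ?_
  push_cast
  field_simp

lemma antitoneOn_log_pow_div_self (k : ℕ) :
    AntitoneOn (fun x : ℝ => log x ^ k / x) (Ici (exp k)) := by
  rcases Nat.eq_zero_or_pos k with rfl | hk
  · simp only [pow_zero, one_div, CharP.cast_eq_zero, exp_zero]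
    exact inv_antitoneOn_Ioi.mono fun _ hx => zero_lt_one.trans_le (mem_Ici.1 hx)
  have hk' : (0 : ℝ) < 1 / k := by positivity
  have hpow : ∀ x ∈ Ici (exp k), log x ^ k / x = (log x / x ^ (1 / k : ℝ)) ^ k := fun x hx => by
    have hx0 : 0 ≤ x := (exp_pos _).le.trans hx
    rw [div_pow, ← rpow_natCast (x ^ _), ← rpow_mul hx0, one_div_mul_cancel (by positivity),
      rpow_one]
  have hnonneg : ∀ x ∈ Ici (exp k), 0 ≤ log x / x ^ (1 / k : ℝ) := fun x hx => by
    have hx1 : 1 ≤ x := (one_le_exp (Nat.cast_nonneg k)).trans hx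
    exact div_nonneg (log_nonneg hx1) (by positivity)
  intro x hx y hy hxy
  have hanti : log y / y ^ (1 / k : ℝ) ≤ log x / x ^ (1 / k : ℝ) := by
    refine log_div_self_rpow_antitoneOn hk' ?_ ?_ hxy <;> simpa
  simp only [hpow x hx, hpow y hy]
  exact pow_le_pow_left₀ (hnonneg y hy) hanti k

lemma tendsto_log_pow_div_self_atTop (k : ℕ) :
    Tendsto (fun x : ℝ => log x ^ k / x) atTop (𝓝 0) := by
  simpa using (isLittleO_pow_log_id_atTop (n := k)).tendsto_div_nhds_zero

lemma exists_tendsto_sum_log_pow_div_sub (k : ℕ) :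
    ∃ c, Tendsto (fun x : ℝ => ∑ n ∈ Icc 1 ⌊x⌋₊, log n ^ k / n - log x ^ (k + 1) / (k + 1))
      atTop (𝓝 c) := by
  have ha : exp k ≤ (⌈exp k⌉₊ : ℝ) := Nat.le_ceil _
  exact exists_tendsto_sum_Icc_floor_sub_of_antitoneOn (f := fun x => log x ^ k / x)
    (F := fun x => log x ^ (k + 1) / (k + 1))
    (fun x hx => hasDerivAt_log_pow_succ_div k ((exp_pos _).trans_le (ha.trans hx)).ne')
    ((antitoneOn_log_pow_div_self k).mono fun _ hx => ha.trans hx)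
    (tendsto_log_pow_div_self_atTop k)

lemma harmonic_add_sub_log_sub_eulerMascheroni_mem_Icc (s : ℕ) {n : ℕ} (hn : n ≠ 0) :
    (harmonic (n + s) : ℝ) - log n - γ ∈ Set.Icc 0 (((s : ℝ) + 1) / n) := by
  have hn0 : (0 : ℝ) < n := by positivity
  have hupper : γ < harmonic (n + s) - log (n + s) := by
    simpa [eulerMascheroniSeq', hn] using
      eulerMascheroniConstant_lt_eulerMascheroniSeq' (n + s)
  have hlower : harmonic (n + s) - log (n + s + 1) < γ := by
    simpa [eulerMascheroniSeq] using eulerMascheroniSeq_lt_eulerMascheroniConstant (n + s)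
  have hlog_mono : log n ≤ log (n + s) :=
    log_le_log hn0 (le_add_of_nonneg_right (Nat.cast_nonneg s))
  have hlog_gap : log (n + s + 1) - log n ≤ (s + 1) / n := by
    rw [← log_div (by positivity) hn0.ne']
    calc log ((n + s + 1) / n) ≤ (n + s + 1) / n - 1 := log_le_sub_one_of_pos (by positivity)
      _ = (s + 1) / n := by field_simp; ring
  constructor <;> linarith

lemma isBigO_harmonic_add_sub_log (s : ℕ) :
    (fun n : ℕ => (harmonic (n + s) : ℝ) - log n - γ) =O[atTop] fun n : ℕ => (1 : ℝ) / n := by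
  refine IsBigO.of_bound (s + 1) ?_
  filter_upwards [eventually_ne_atTop 0] with n hn
  obtain ⟨h0, h1⟩ := harmonic_add_sub_log_sub_eulerMascheroni_mem_Icc s hn
  rw [norm_of_nonneg h0, norm_of_nonneg (by positivity)]
  simpa [div_eq_mul_one_div (s + 1 : ℝ)] using h1

lemma factorial_mul_choose_add_mem_Icc (s n : ℕ) :
    (s ! * (n + s).choose s : ℝ) ∈ Set.Icc ((n : ℝ) ^ s) ((n + s) ^ s) := by
  have hfact : (0 : ℝ) < s ! := by positivity
  have hlow := Nat.pow_le_choose (α := ℝ) s (n + s)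
  have hup := Nat.choose_le_pow_div (α := ℝ) s (n + s)
  rw [show n + s + 1 - s = n + 1 by omega, div_le_iff₀' hfact] at hlow
  rw [le_div_iff₀' hfact] at hup
  push_cast at hlow hup
  exact ⟨(pow_le_pow_left₀ n.cast_nonneg (by linarith) s).trans hlow, hup⟩

lemma isBigO_choose_add_div_pow_sub (s : ℕ) :
    (fun n : ℕ => ((n + s).choose s : ℝ) / n ^ s - 1 / s !) =O[atTop] fun n : ℕ => (1 : ℝ) / n := by
  have hderiv : (fun t : ℝ => (1 + s * t) ^ s - 1) =O[𝓝 0] fun t => t := by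
    simpa using (show DifferentiableAt ℝ (fun t : ℝ => (1 + s * t) ^ s) 0 by fun_prop).isBigO_sub
  refine IsBigO.trans (IsBigO.of_bound (1 / s !) ?_)
    (hderiv.comp_tendsto tendsto_one_div_atTop_nhds_zero_nat)
  filter_upwards [eventually_ne_atTop 0] with n hn
  have hn0 : (0 : ℝ) < n := by positivity
  have hfact : (0 : ℝ) < s ! := by positivity
  obtain ⟨hlow, hup⟩ := factorial_mul_choose_add_mem_Icc s n
  have hscale : (1 + s * (1 / n : ℝ)) ^ s - 1 = ((n + s) ^ s - n ^ s) / n ^ s := by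
    rw [show 1 + s * (1 / n : ℝ) = (n + s) / n by field_simp, div_pow,
      div_sub_one (by positivity)]
  have hdiff : ((n + s).choose s : ℝ) / n ^ s - 1 / s ! =
      (s ! * (n + s).choose s - n ^ s) / (n ^ s * s !) := by
    field_simp
  simp only [Function.comp_apply, hscale, hdiff]
  rw [norm_of_nonneg (div_nonneg (sub_nonneg.2 hlow) (by positivity)),
    norm_of_nonneg (div_nonneg (sub_nonneg.2 (hlow.trans hup)) (by positivity)),
    one_div_mul_eq_div, div_div]
  gcongr

lemma summable_log_pow_div_sq (k : ℕ) : Summable fun n : ℕ => log n ^ k / (n : ℝ) ^ 2 := by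
  refine summable_of_isBigO_nat (Real.summable_nat_rpow.2 (by norm_num : (-3 / 2 : ℝ) < -1)) ?_
  have hlog : (fun n : ℕ => log n ^ (k : ℝ)) =O[atTop] fun n : ℕ => (n : ℝ) ^ (1 / 2 : ℝ) :=
    (isLittleO_log_rpow_rpow_atTop k (by norm_num)).natCast_atTop.isBigO
  refine (hlog.mul (isBigO_refl (fun n : ℕ => ((n : ℝ) ^ 2)⁻¹) atTop)).congr' ?_ ?_
  · filter_upwards with n
    rw [rpow_natCast, div_eq_mul_inv]
  · filter_upwards [eventually_gt_atTop 0] with n hn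
    rw [← rpow_natCast, ← rpow_neg (Nat.cast_nonneg n), ← rpow_add (by positivity)]
    norm_num

lemma summable_hh_succ_sub_leading_terms (s m : ℕ) :
    Summable fun n : ℕ => hh (s + 1) n * log n ^ m / (n : ℝ) ^ (s + 1)
      - 1 / s ! * (log n ^ (m + 1) / n) + (harmonic s - γ) / s ! * (log n ^ m / n) := by
  set A : ℕ → ℝ := fun n => ((n + s).choose s : ℝ) / n ^ s
  have hA : (fun n => A n - 1 / s !) =O[atTop] fun n : ℕ => (1 : ℝ) / n :=
    isBigO_choose_add_div_pow_sub s
  have hA_bdd : A =O[atTop] fun _ => (1 : ℝ) := by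
    have hA_lim := hA.trans_tendsto tendsto_one_div_atTop_nhds_zero_nat
    exact (tendsto_sub_nhds_zero_iff.1 hA_lim).isBigO_one ℝ
  have hlog : (fun n : ℕ => log n + (γ - harmonic s)) =O[atTop] fun n : ℕ => log n :=
    (isBigO_refl _ _).add (isLittleO_const_log_atTop.natCast_atTop.isBigO)
  have hinv_log : (fun n : ℕ => (1 : ℝ) * (1 / n)) =O[atTop] fun n : ℕ => log n / n := by
    refine IsBigO.of_bound 1 ?_
    filter_upwards [(tendsto_log_atTop.comp tendsto_natCast_atTop_atTop).eventually_ge_atTop 1]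
      with n (hn : 1 ≤ log n)
    rw [one_mul, one_mul, norm_div, norm_div, norm_one, norm_of_nonneg (zero_le_one.trans hn)]
    gcongr
  -- the summand minus its two leading terms is `log n ^ m / n` times this bracket
  have hR : (fun n => A n * ((harmonic (n + s) : ℝ) - log n - γ)
      + (A n - 1 / s !) * (log n + (γ - harmonic s))) =O[atTop] fun n : ℕ => log n / n :=
    ((hA_bdd.mul (isBigO_harmonic_add_sub_log s)).trans hinv_log).add
      ((hA.mul hlog).trans ((isBigO_refl _ _).congr_left fun n => by ring))
  refine summable_of_isBigO_nat (summable_log_pow_div_sq (m + 1))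
    (((isBigO_refl (fun n : ℕ => log n ^ m / n) atTop).mul hR).congr' ?_ ?_)
  · filter_upwards with n
    simp only [A, hh_succ_eq_choose_mul]
    ring
  · filter_upwards with n
    ring

lemma Summable.tendsto_sum_Icc_one {f : ℕ → ℝ} (hf : Summable f) :
    Tendsto (fun N => ∑ n ∈ Icc 1 N, f n) atTop (𝓝 (∑' n, f n - f 0)) := by
  have hsplit : ∀ N, ∑ n ∈ Icc 1 N, f n = ∑ n ∈ range (N + 1), f n - f 0 := fun N => by
    rw [range_eq_Ico, sum_eq_sum_Ico_succ_bot (Nat.succ_pos N), zero_add, Nat.succ_eq_add_one,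
      Finset.Ico_add_one_right_eq_Icc]
    ring
  simp only [hsplit]
  exact (hf.tendsto_sum_tsum_nat.comp (tendsto_add_atTop_nat 1)).sub_const (f 0)

theorem stmt9 (r m : ℕ) (hr : 0 < r) :
    ∃ c : ℝ, Tendsto (fun x : ℝ =>
        (∑ n ∈ Finset.Icc 1 ⌊x⌋₊, hh r n * (Real.log n) ^ m / (n : ℝ) ^ r)
          - (1 / (r - 1).factorial) * (Real.log x) ^ (m + 2) / (m + 2)
          + (digamma r / (r - 1).factorial) * (Real.log x) ^ (m + 1) / (m + 1))
      atTop (nhds c) := by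
  obtain ⟨s, rfl⟩ : ∃ s, r = s + 1 := ⟨r - 1, by omega⟩
  obtain ⟨c₁, h₁⟩ := exists_tendsto_sum_log_pow_div_sub (m + 1)
  obtain ⟨c₀, h₀⟩ := exists_tendsto_sum_log_pow_div_sub m
  have hE := (summable_hh_succ_sub_leading_terms s m).tendsto_sum_Icc_one.comp
    (tendsto_nat_floor_atTop (α := ℝ))
  refine ⟨_, ((hE.add (h₁.const_mul (1 / s ! : ℝ))).sub
    (h₀.const_mul ((harmonic s - γ) / s ! : ℝ))).congr fun x => ?_⟩
  simp only [Function.comp_apply, Nat.add_sub_cancel, Nat.cast_add_one, digamma_nat_add_one,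
    Finset.sum_add_distrib, Finset.sum_sub_distrib, ← Finset.mul_sum]
  ring
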